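/- The set of solutions (p2, p3, p10, p12, p41, p43, p45, p119) ∈ ℚ^8 with all coordinates nonzero of the system p41 = p10^3·p12, p43 = p10^2·p12^2, p45 = p10·p12^3, p119 = p41·p43·p10^2·p12^3, p119 = p10^12, p119 = p12^10, p119 = p2^60, p119 = p3^40 forms, under componentwise multiplication, a group of order exactly 8 in which every element squares to the identity; hence it is isomorphic to (ℤ/2ℤ)^3. -/

import Mathlib

/-!
The relation `p119 = p41·p43·p10²·p12³ = p10⁷·p12⁶`, together with `p119 = p10¹² = p12¹⁰`, gives
`p12⁶ = p10⁵` and hence `p10³⁶ = p12³⁰ = p10²⁵`, so `p10` is an 11th root of unity; in `ℚ` this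
forces `p10 = 1` and then `p119 = 1`. The remaining coordinates are then roots of unity in `ℚ`,
i.e. `±1`, and the solutions are exactly the tuples `(±1, ±1, 1, ε, ε, 1, ε, 1)` with
`ε = ±1`: the image of an injective homomorphism from `(ℤ/2ℤ)³`.
-/

section LinearOrderedRing

variable {R : Type*} [Ring R] [LinearOrder R] [IsStrictOrderedRing R]

theorem Units.eq_one_or_eq_neg_one_of_pow_eq_one {x : Rˣ} {n : ℕ} (hn : n ≠ 0) (h : x ^ n = 1) :
    x = 1 ∨ x = -1 := by
  rw [Units.ext_iff, Units.val_pow_eq_pow_val, Units.val_one, pow_eq_one_iff_of_ne_zero hn] at h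
  rcases h with h | ⟨h, -⟩
  · exact Or.inl (Units.ext h)
  · exact Or.inr (Units.ext h)

theorem Units.eq_one_of_pow_eq_one_of_odd {x : Rˣ} {n : ℕ} (hn : Odd n) (h : x ^ n = 1) :
    x = 1 := by
  rw [Units.ext_iff, Units.val_pow_eq_pow_val, Units.val_one,
    pow_eq_one_iff_of_ne_zero hn.pos.ne'] at h
  rcases h with h | ⟨-, he⟩
  · exact Units.ext h
  · exact absurd he (Nat.not_even_iff_odd.mpr hn)

theorem Units.sq_eq_one_of_pow_eq_one {x : Rˣ} {n : ℕ} (hn : n ≠ 0) (h : x ^ n = 1) :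
    x ^ 2 = 1 := by
  rcases Units.eq_one_or_eq_neg_one_of_pow_eq_one hn h with rfl | rfl
  · exact one_pow 2
  · exact neg_one_sq

theorem exists_neg_one_pow_val_eq {x : Rˣ} (h : x ^ 2 = 1) : ∃ a : ZMod 2, (-1) ^ a.val = x := by
  rcases Units.eq_one_or_eq_neg_one_of_pow_eq_one two_ne_zero h with rfl | rfl
  · exact ⟨0, pow_zero _⟩
  · exact ⟨1, pow_one _⟩

theorem neg_one_pow_val_injective : Function.Injective fun a : ZMod 2 => (-1 : Rˣ) ^ a.val := by
  have hne : (1 : Rˣ) ≠ -1 := fun h => by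
    have := congrArg Units.val h
    push_cast at this
    exact (neg_one_lt_zero.trans zero_lt_one).ne' this
  intro a b h
  fin_cases a <;> fin_cases b <;> first | rfl | simp_all [ZMod.val]

end LinearOrderedRing

theorem pow_val_add {M : Type*} [Monoid M] {n : ℕ} [NeZero n] {x : M} (hx : x ^ n = 1)
    (a b : ZMod n) : x ^ (a + b).val = x ^ a.val * x ^ b.val := by
  rw [ZMod.val_add, ← pow_eq_pow_mod _ hx, pow_add]

theorem pow_eleven_eq_one_of_pow_twelve_eq {G : Type*} [Group G] {a b : G}
    (h₁ : a ^ 12 = a ^ 7 * b ^ 6) (h₂ : a ^ 12 = b ^ 10) : a ^ 11 = 1 := by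
  have hb : b ^ 6 = a ^ 5 := by
    rw [show a ^ 12 = a ^ 7 * a ^ 5 by group] at h₁
    exact (mul_left_cancel h₁).symm
  calc a ^ 11 = (a ^ 12) ^ 3 * ((a ^ 5) ^ 5)⁻¹ := by group
    _ = (b ^ 10) ^ 3 * ((b ^ 6) ^ 5)⁻¹ := by rw [h₂, hb]
    _ = 1 := by group

/-- Coordinates `0, …, 7` stand for `p2, p3, p10, p12, p41, p43, p45, p119`. -/
def coherentTuples (G : Type*) [CommMonoid G] : Set (Fin 8 → G) :=
  {p | p 4 = p 2 ^ 3 * p 3 ∧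
    p 5 = p 2 ^ 2 * p 3 ^ 2 ∧
    p 6 = p 2 * p 3 ^ 3 ∧
    p 7 = p 4 * p 5 * p 2 ^ 2 * p 3 ^ 3 ∧
    p 7 = p 2 ^ 12 ∧
    p 7 = p 3 ^ 10 ∧
    p 7 = p 0 ^ 60 ∧
    p 7 = p 1 ^ 40}

theorem cons_mem_coherentTuples {G : Type*} [CommMonoid G] {x y z : G}
    (hx : x ^ 2 = 1) (hy : y ^ 2 = 1) (hz : z ^ 2 = 1) :
    ![x, y, 1, z, z, 1, z, 1] ∈ coherentTuples G := by
  have even_pow {w : G} (hw : w ^ 2 = 1) (k : ℕ) : w ^ (2 * k) = 1 := by rw [pow_mul, hw, one_pow]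
  have hz3 : z ^ 3 = z := by rw [pow_succ, hz, one_mul]
  refine ⟨?_, ?_, ?_, ?_, (one_pow 12).symm, (even_pow hz 5).symm, (even_pow hx 30).symm,
    (even_pow hy 20).symm⟩ <;>
    simp only [Matrix.cons_val, one_pow, one_mul, mul_one, ← sq, hz, hz3]

theorem exists_eq_cons_of_mem_coherentTuples {p : Fin 8 → ℚˣ} (hp : p ∈ coherentTuples ℚˣ) :
    ∃ x y z : ℚˣ, x ^ 2 = 1 ∧ y ^ 2 = 1 ∧ z ^ 2 = 1 ∧ p = ![x, y, 1, z, z, 1, z, 1] := by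
  obtain ⟨h41, h43, h45, h119, h10, h12, h2, h3⟩ := hp
  have hp119_expand : p 2 ^ 12 = p 2 ^ 7 * p 3 ^ 6 := by
    rw [← h10, h119, h41, h43]
    apply Additive.ofMul.injective
    simp only [ofMul_mul, ofMul_pow]
    abel
  have hp10 : p 2 = 1 := Units.eq_one_of_pow_eq_one_of_odd (by decide)
    (pow_eleven_eq_one_of_pow_twelve_eq hp119_expand (h10.symm.trans h12))
  have hp119 : p 7 = 1 := by rw [h10, hp10, one_pow]
  have hp12 : p 3 ^ 2 = 1 := Units.sq_eq_one_of_pow_eq_one (by norm_num) (h12.symm.trans hp119)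
  refine ⟨p 0, p 1, p 3, Units.sq_eq_one_of_pow_eq_one (by norm_num) (h2.symm.trans hp119),
    Units.sq_eq_one_of_pow_eq_one (by norm_num) (h3.symm.trans hp119), hp12, ?_⟩
  funext i
  fin_cases i <;> simp [h41, h43, h45, hp10, hp119, hp12, pow_succ]

def coherentTupleHom : Multiplicative (Fin 3 → ZMod 2) →* (Fin 8 → ℚˣ) where
  toFun v :=
    let s (i : Fin 3) : ℚˣ := (-1) ^ (Multiplicative.toAdd v i).val
    ![s 0, s 1, 1, s 2, s 2, 1, s 2, 1]
  map_one' := by funext i; fin_cases i <;> rfl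
  map_mul' v w := by
    funext i
    fin_cases i <;> simp [pow_val_add neg_one_sq]

theorem coherentTupleHom_injective : Function.Injective coherentTupleHom := by
  intro v w h
  funext i
  fin_cases i
  · exact neg_one_pow_val_injective (congrFun h 0)
  · exact neg_one_pow_val_injective (congrFun h 1)
  · exact neg_one_pow_val_injective (congrFun h 3)

theorem range_coherentTupleHom : Set.range coherentTupleHom = coherentTuples ℚˣ := by
  refine Set.Subset.antisymm ?_ fun p hp => ?_
  · rintro _ ⟨v, rfl⟩
    have hsq (a : ZMod 2) : ((-1 : ℚˣ) ^ a.val) ^ 2 = 1 := by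
      rw [← pow_mul, mul_comm, pow_mul, neg_one_sq, one_pow]
    exact cons_mem_coherentTuples (hsq _) (hsq _) (hsq _)
  · obtain ⟨x, y, z, hx, hy, hz, rfl⟩ := exists_eq_cons_of_mem_coherentTuples hp
    obtain ⟨a, rfl⟩ := exists_neg_one_pow_val_eq hx
    obtain ⟨b, rfl⟩ := exists_neg_one_pow_val_eq hy
    obtain ⟨c, rfl⟩ := exists_neg_one_pow_val_eq hz
    exact ⟨Multiplicative.ofAdd ![a, b, c], rfl⟩

/-- Remark 3.3, algebra (ΛU₁, δ₁): nonzero solutions (tuples `Fin 8 → ℚˣ`,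
coordinates `p 0 = p2`, `p 1 = p3`, `p 2 = p10`, `p 3 = p12`, `p 4 = p41`,
`p 5 = p43`, `p 6 = p45`, `p 7 = p119`) form a group of order 8 under
componentwise multiplication in which every element squares to the identity;
hence it is isomorphic to (ℤ/2ℤ)³. -/
theorem stmt_6 :
    ∃ H : Subgroup (Fin 8 → ℚˣ),
      (H : Set (Fin 8 → ℚˣ)) =
        {p : Fin 8 → ℚˣ | p 4 = p 2 ^ 3 * p 3 ∧
        p 5 = p 2 ^ 2 * p 3 ^ 2 ∧
        p 6 = p 2 * p 3 ^ 3 ∧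
        p 7 = p 4 * p 5 * p 2 ^ 2 * p 3 ^ 3 ∧
        p 7 = p 2 ^ 12 ∧
        p 7 = p 3 ^ 10 ∧
        p 7 = p 0 ^ 60 ∧
        p 7 = p 1 ^ 40} ∧
      Nat.card H = 8 ∧
      (∀ x ∈ H, x * x = 1) ∧
      Nonempty (H ≃* Multiplicative (Fin 3 → ZMod 2)) := by
  let e := MonoidHom.ofInjective coherentTupleHom_injective
  refine ⟨coherentTupleHom.range, by rw [MonoidHom.coe_range, range_coherentTupleHom]; rfl,
    ?_, ?_, ⟨e.symm⟩⟩
  · rw [← Nat.card_congr e.toEquiv]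
    simp [Nat.card_eq_fintype_card]
  · rintro _ ⟨v, rfl⟩
    have hv : v * v = 1 := funext fun i => ZModModule.add_self (Multiplicative.toAdd v i)
    rw [← map_mul, hv, map_one]
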